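/- For t ≥ 3, the set { {i,j}_t : ij ∈ E(G) } of all vertices newly contracted at step t forms an independent set in S[G,t]. -/

import Mathlib

variable {V : Type*}

/-- Adjacency of the generalized Sierpiński graph `S(G,t)` on words of length `t`:
`u` and `v` are adjacent iff there is an index `i` with `u j = v j` for `j < i`,
`u i` adjacent to `v i` in `G`, and `u j = v i`, `v j = u i` for `j > i`. -/
def sierAdj (G : SimpleGraph V) (t : ℕ) (u v : Fin t → V) : Prop :=
  ∃ i : Fin t, (∀ j, j < i → u j = v j) ∧ G.Adj (u i) (v i) ∧
    ∀ j, i < j → u j = v i ∧ v j = u i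

/-- The generalized Sierpiński graph `S(G,t)`. -/
def sier (G : SimpleGraph V) (t : ℕ) : SimpleGraph (Fin t → V) where
  Adj := sierAdj G t
  symm := by
    constructor
    rintro u v ⟨i, h1, h2, h3⟩
    exact ⟨i, fun j hj => (h1 j hj).symm, h2.symm,
      fun j hj => ⟨(h3 j hj).2, (h3 j hj).1⟩⟩
  loopless := by
    constructor
    rintro u ⟨i, h1, h2, h3⟩
    exact G.loopless.irrefl _ h2

/-- `linkingAt G t p u v` : `uv` is a linking edge of `S(G,t)` appearing at
(0-indexed) position `p < t - 1`; in the paper's terminology this linking edge is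
produced at step `t - p`, and its contraction is a vertex contracted at step `t - p`. -/
def linkingAt (G : SimpleGraph V) (t p : ℕ) (u v : Fin t → V) : Prop :=
  ∃ i : Fin t, i.val = p ∧ i.val + 1 < t ∧ (∀ j, j < i → u j = v j) ∧
    G.Adj (u i) (v i) ∧ ∀ j, i < j → u j = v i ∧ v j = u i

/-- `uv` is a linking edge of `S(G,t)` (an edge appearing at some step `≥ 2`). -/
def linking (G : SimpleGraph V) (t : ℕ) (u v : Fin t → V) : Prop :=
  ∃ p, linkingAt G t p u v

/-- The equivalence relation on words generated by identifying the two endpoints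
of each linking edge. -/
def gasketSetoid (G : SimpleGraph V) (t : ℕ) : Setoid (Fin t → V) :=
  Relation.EqvGen.setoid (linking G t)

/-- The generalized Sierpiński gasket graph `S[G,t]`, obtained from `S(G,t)` by
contracting all linking edges. -/
def gasket (G : SimpleGraph V) (t : ℕ) :
    SimpleGraph (Quotient (gasketSetoid G t)) where
  Adj x y := x ≠ y ∧ ∃ u v, Quotient.mk (gasketSetoid G t) u = x ∧
    Quotient.mk (gasketSetoid G t) v = y ∧ sierAdj G t u v
  symm := by
    constructor
    rintro x y ⟨hxy, u, v, hu, hv, h⟩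
    exact ⟨hxy.symm, v, u, hv, hu, (sier G t).symm.symm _ _ h⟩
  loopless := ⟨fun _ h => h.1 rfl⟩

/-- The expanded word `i j j ... j`; for `ij ∈ E(G)` its class in `S[G,t]` is the
contracted vertex `{i,j}_t`. -/
def topWord (t : ℕ) (i j : V) : Fin t → V := fun k => if k.val = 0 then i else j

/-!
Call a word tail-constant if all its letters after the first are equal, like `ijj…j`. Linking
edges preserve this: one at a position `p ≥ 1` would need `u p` adjacent to `u (p+1) = u p`. So
every word in the classes of `ijj…j` and `kll…l` is tail-constant. An edge of `S(G,t)` between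
two such words at a position `p < t - 1` is linking and its ends get identified; at the last
position `t - 1 ≥ 2` the words agree at position `1`, hence on their whole tails, so the letters
there cannot be adjacent.
-/

def IsTailConstant {t : ℕ} (u : Fin t → V) : Prop :=
  ∀ x y : Fin t, x.val ≠ 0 → y.val ≠ 0 → u x = u y

lemma isTailConstant_topWord (t : ℕ) (a b : V) : IsTailConstant (topWord t a b) := by
  intro x y hx hy
  simp [topWord, hx, hy]

section Linking

variable {G : SimpleGraph V} {t : ℕ} {u v : Fin t → V}

lemma linking.symm (h : linking G t u v) : linking G t v u := by
  obtain ⟨p, m, hm, hmt, hpre, hA, htail⟩ := h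
  exact ⟨p, m, hm, hmt, fun j hj => (hpre j hj).symm, hA.symm,
    fun j hj => ⟨(htail j hj).2, (htail j hj).1⟩⟩

lemma linking.isTailConstant (h : linking G t u v) (hu : IsTailConstant u) :
    IsTailConstant v := by
  obtain ⟨-, m, -, hmt, -, hA, htail⟩ := h
  by_cases hm : m.val = 0
  · intro x y hx hy
    rw [(htail x (Fin.lt_def.2 (by omega))).2, (htail y (Fin.lt_def.2 (by omega))).2]
  · have hnext := htail ⟨m.val + 1, hmt⟩ (Fin.lt_def.2 (Nat.lt_succ_self _))
    rw [← hnext.1, hu m ⟨m.val + 1, hmt⟩ hm (Nat.succ_ne_zero _)] at hA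
    exact absurd hA (G.loopless.irrefl _)

lemma isTailConstant_of_eqvGen_linking (h : Relation.EqvGen (linking G t) u v)
    (hv : IsTailConstant v) : IsTailConstant u := by
  have hiff : Relation.EqvGen (fun u v : Fin t → V => IsTailConstant u ↔ IsTailConstant v) u v :=
    Relation.EqvGen.mono (fun _ _ h => ⟨h.isTailConstant, h.symm.isTailConstant⟩) _ _ h
  exact ((Equivalence.eqvGen_iff (r := fun u v : Fin t → V => IsTailConstant u ↔ IsTailConstant v)
    ⟨fun _ => Iff.rfl, Iff.symm, Iff.trans⟩).1 hiff).2 hv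

lemma sierAdj.linking_of_isTailConstant (ht : 3 ≤ t) (h : sierAdj G t u v)
    (hu : IsTailConstant u) (hv : IsTailConstant v) : linking G t u v := by
  obtain ⟨m, hpre, hA, htail⟩ := h
  by_cases hmt : m.val + 1 < t
  · exact ⟨m.val, m, rfl, hmt, hpre, hA, htail⟩
  · have hm : m.val = t - 1 := by omega
    have h1 : u ⟨1, by omega⟩ = v ⟨1, by omega⟩ := hpre _ (Fin.lt_def.2 (by simp; omega))
    rw [hu m ⟨1, by omega⟩ (by omega) one_ne_zero, h1,
      hv ⟨1, by omega⟩ m one_ne_zero (by omega)] at hA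
    exact absurd hA (G.loopless.irrefl _)

end Linking

theorem stmt_7_general (G : SimpleGraph V) (t : ℕ) (ht : 3 ≤ t) (i j k l : V) :
    ¬ (gasket G t).Adj (Quotient.mk (gasketSetoid G t) (topWord t i j))
        (Quotient.mk (gasketSetoid G t) (topWord t k l)) := by
  rintro ⟨hne, u, v, hu, hv, huv⟩
  have hlink : linking G t u v :=
    huv.linking_of_isTailConstant ht
      (isTailConstant_of_eqvGen_linking (Quotient.exact hu) (isTailConstant_topWord t i j))
      (isTailConstant_of_eqvGen_linking (Quotient.exact hv) (isTailConstant_topWord t k l))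
  exact hne (hu ▸ hv ▸ Quotient.sound (Relation.EqvGen.rel _ _ hlink))

/-- for `t ≥ 3`, the set of vertices `{i,j}_t` newly contracted at step `t`
(the classes of the words `ijj...j` for `ij ∈ E(G)`) is an independent set in `S[G,t]`. -/
theorem stmt_7 (G : SimpleGraph V) (t : ℕ) (ht : 3 ≤ t) (i j k l : V)
    (hij : G.Adj i j) (hkl : G.Adj k l) :
    ¬ (gasket G t).Adj (Quotient.mk (gasketSetoid G t) (topWord t i j))
        (Quotient.mk (gasketSetoid G t) (topWord t k l)) :=
  stmt_7_general G t ht i j k l
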